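/- arXiv:1009.3283 — 2 statements merged into one kernel-verified Lean document; each statement's English description precedes it below -/
import Mathlib

section
/- Let α ∈ gl(n,ℝ) be a diagonal matrix with rational entries a₁ ≤ a₂ ≤ … ≤ aₙ. Then the set {X ∈ gl(n,ℝ) : [X,α] = 0 and tr(Xα) = 0} is a Lie subalgebra of gl(n,ℝ), and it is the Lie algebra of the group {g ∈ GL(n,ℝ) : gα = αg and Π det(g_i)^{q a_i} = 1}, where the g_i are the diagonal blocks of g corresponding to the eigenspaces of α and q is a common denominator of the a_i; in particular this group is a real algebraic subgroup of GL(n,ℝ). -/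
/-!
Since `α` is diagonal, `X` commutes with `α` iff `X` is block diagonal for the eigenspaces of
`α`; then so is `exp (t • X)`, with blocks `exp (t • X_c)`. By `det (exp Y) = exp (tr Y)`
(integrated from Jacobi's formula at the identity), the character `g ↦ ∏ det (g_c) ^ c` takes
the value `exp (t ∑ₖ eₖ Xₖₖ) = exp (t q tr (X α))` on `exp (t • X)`, so it is `1` for all `t`
iff `tr (X α) = 0`. Conversely, differentiating `exp (t • X) α = α exp (t • X)` at `t = 0`
gives `X α = α X`. The set is a Lie subalgebra because `tr (⁅X, Y⁆ α) = tr (X ⁅Y, α⁆)`.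
-/

open NormedSpace

namespace Matrix

variable {ι : Type*} [Fintype ι] [DecidableEq ι]

section Jacobi

theorem det_one_updateRow {R : Type*} [CommRing R] (i : ι) (v : ι → R) :
    ((1 : Matrix ι ι R).updateRow i v).det = v i := by
  rw [← det_transpose, ← transpose_one, updateRow_transpose, transpose_transpose,
    ← cramer_apply, cramer_one]
  rfl

variable {𝕜 : Type*} [NontriviallyNormedField 𝕜]

def detRowContinuousAlternating : (ι → 𝕜) [⋀^ι]→L[𝕜] 𝕜 :=
  { detRowAlternating with cont := continuous_id.matrix_det }

theorem hasDerivAt_det_of_eq_one {A : 𝕜 → Matrix ι ι 𝕜} {A' : Matrix ι ι 𝕜} {t : 𝕜}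
    (hA : ∀ i, HasDerivAt (fun s => A s i) (A' i) t) (h1 : A t = 1) :
    HasDerivAt (fun s => (A s).det) A'.trace t := by
  have h := (HasFDerivAt.multilinear_comp
    (detRowContinuousAlternating (ι := ι) (𝕜 := 𝕜)).toContinuousMultilinearMap
    fun i => (hA i).hasFDerivAt).hasDerivAt
  refine h.congr_deriv ?_
  simp only [_root_.sum_apply, ContinuousLinearMap.comp_apply,
    ContinuousLinearMap.toSpanSingleton_apply, one_smul, h1]
  exact Finset.sum_congr rfl fun i _ => det_one_updateRow i (A' i)

end Jacobi

theorem hasDerivAt_exp_smul_row (M : Matrix ι ι ℝ) (t : ℝ) (i : ι) :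
    HasDerivAt (fun s : ℝ => exp (s • M) i) ((exp (t • M) * M) i) t := by
  -- Any norm will do; the ℓ∞ operator norm makes `Matrix ι ι ℝ` a complete normed algebra
  -- whose topology is the product topology.
  let : NormedRing (Matrix ι ι ℝ) := Matrix.linftyOpNormedRing
  let : NormedAlgebra ℝ (Matrix ι ι ℝ) := Matrix.linftyOpNormedAlgebra
  exact (ContinuousLinearMap.proj (R := ℝ) (φ := fun _ : ι => ι → ℝ) i).hasFDerivAt.comp_hasDerivAt
    t (hasDerivAt_exp_smul_const M t)

theorem hasDerivAt_det_exp_smul (M : Matrix ι ι ℝ) (t : ℝ) :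
    HasDerivAt (fun s : ℝ => (exp (s • M)).det) ((exp (t • M)).det * M.trace) t := by
  have hshift : ∀ i, HasDerivAt (fun s : ℝ => exp ((s - t) • M) i) (M i) t := fun i => by
    simpa using (hasDerivAt_exp_smul_row M (t - t) i).comp_sub_const t t
  have hsplit : (fun s : ℝ => (exp (s • M)).det)
      = fun s => (exp (t • M)).det * (exp ((s - t) • M)).det := by
    funext s
    rw [← det_mul, ← exp_add_of_commute _ _ (((Commute.refl M).smul_left t).smul_right _),
      ← add_smul, add_sub_cancel]
  rw [hsplit]
  exact (hasDerivAt_det_of_eq_one hshift (by simp)).const_mul _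

theorem det_exp (M : Matrix ι ι ℝ) : (exp M).det = Real.exp M.trace := by
  have hderiv : ∀ s : ℝ,
      HasDerivAt (fun s => (exp (s • M)).det * Real.exp (-s * M.trace)) 0 s := fun s => by
    refine ((hasDerivAt_det_exp_smul M s).fun_mul
      ((hasDerivAt_neg s).mul_const M.trace).exp).congr_deriv ?_
    ring
  have hconst := is_const_of_deriv_eq_zero (fun s => (hderiv s).differentiableAt)
    (fun s => (hderiv s).deriv) 1 0
  simp only [one_smul, zero_smul, exp_zero, det_one, neg_mul, one_mul, zero_mul, neg_zero,
    Real.exp_zero, mul_one] at hconst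
  rwa [Real.exp_neg, mul_inv_eq_one₀ (Real.exp_ne_zero _)] at hconst

theorem commute_of_forall_commute_exp_smul {X A : Matrix ι ι ℝ}
    (h : ∀ t : ℝ, Commute (exp (t • X)) A) : Commute X A := by
  let : NormedRing (Matrix ι ι ℝ) := Matrix.linftyOpNormedRing
  let : NormedAlgebra ℝ (Matrix ι ι ℝ) := Matrix.linftyOpNormedAlgebra
  have hexp := hasDerivAt_exp_smul_const (𝕂 := ℝ) X 0
  rw [zero_smul, exp_zero, one_mul] at hexp
  have hcomm := (hexp.mul_const A).fun_sub (hexp.const_mul A)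
  have hzero : HasDerivAt (fun _ : ℝ => (0 : Matrix ι ι ℝ)) (X * A - A * X) 0 :=
    hcomm.congr_of_eventuallyEq (.of_forall fun t => (sub_eq_zero.mpr (h t).eq).symm)
  exact sub_eq_zero.mp (hzero.unique (hasDerivAt_const 0 0))

section Blocks

variable {β : Type*} [LinearOrder β] {b : ι → β}

omit [DecidableEq ι] in
theorem BlockTriangular.toSquareBlock_mul {R : Type*} [CommRing R] {M N : Matrix ι ι R}
    (hM : M.BlockTriangular b) (hN : N.BlockTriangular b) (k : β) :
    (M * N).toSquareBlock b k = M.toSquareBlock b k * N.toSquareBlock b k := by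
  ext ⟨i, hi⟩ ⟨j, hj⟩
  simp only [toSquareBlock_def, of_apply, mul_apply]
  rw [← Fintype.sum_subtype_add_sum_subtype (fun l => b l = k), add_eq_left]
  refine Finset.sum_eq_zero fun l _ => ?_
  rcases lt_or_gt_of_ne l.2 with hl | hl
  · rw [hM (hi ▸ hl), zero_mul]
  · rw [hN (hj ▸ hl), mul_zero]

theorem BlockTriangular.toSquareBlock_pow {R : Type*} [CommRing R] {M : Matrix ι ι R}
    (hM : M.BlockTriangular b) (k : β) (n : ℕ) :
    (M ^ n).toSquareBlock b k = M.toSquareBlock b k ^ n := by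
  induction n with
  | zero => ext ⟨i, _⟩ ⟨j, _⟩; simp [toSquareBlock_def, one_apply, Subtype.ext_iff]
  | succ n ih => rw [pow_succ, (hM.pow n).toSquareBlock_mul hM, ih, pow_succ]

theorem BlockTriangular.toSquareBlock_exp {M : Matrix ι ι ℝ}
    (hM : M.BlockTriangular b) (k : β) :
    (NormedSpace.exp M).toSquareBlock b k = NormedSpace.exp (M.toSquareBlock b k) := by
  let : NormedRing (Matrix ι ι ℝ) := Matrix.linftyOpNormedRing
  let : NormedAlgebra ℝ (Matrix ι ι ℝ) := Matrix.linftyOpNormedAlgebra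
  let : NormedRing (Matrix {i // b i = k} {i // b i = k} ℝ) := Matrix.linftyOpNormedRing
  let : NormedAlgebra ℝ (Matrix {i // b i = k} {i // b i = k} ℝ) := Matrix.linftyOpNormedAlgebra
  have hs := exp_series_hasSum_exp' (𝕂 := ℝ) M
  have hblock : HasSum (fun n => ((n.factorial⁻¹ : ℝ) • M ^ n).toSquareBlock b k)
      ((NormedSpace.exp M).toSquareBlock b k) :=
    Pi.hasSum.mpr fun i => Pi.hasSum.mpr fun j => Pi.hasSum.mp (Pi.hasSum.mp hs i) j
  have hterm : ∀ n : ℕ, ((n.factorial⁻¹ : ℝ) • M ^ n).toSquareBlock b k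
      = (n.factorial⁻¹ : ℝ) • M.toSquareBlock b k ^ n := fun n => by
    rw [← hM.toSquareBlock_pow]; rfl
  simp only [hterm] at hblock
  exact hblock.unique (exp_series_hasSum_exp' _)

end Blocks

theorem BlockTriangular.prod_det_toSquareBlock_exp_zpow {M : Matrix ι ι ℝ} {b : ι → ℤ}
    (hM : M.BlockTriangular b) :
    ∏ c ∈ Finset.univ.image b, ((NormedSpace.exp M).toSquareBlock b c).det ^ c
      = Real.exp (∑ i, (b i : ℝ) * M i i) := by
  rw [← Finset.sum_fiberwise_of_maps_to fun i _ => Finset.mem_image_of_mem b (Finset.mem_univ i),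
    Real.exp_sum]
  refine Finset.prod_congr rfl fun c _ => ?_
  rw [hM.toSquareBlock_exp, det_exp, ← Real.rpow_intCast, ← Real.exp_mul]
  congr 1
  calc (M.toSquareBlock b c).trace * c = ∑ i : {i // b i = c}, (b i : ℝ) * M i i := by
        rw [trace, Finset.sum_mul]
        exact Finset.sum_congr rfl fun i _ => by rw [i.2, mul_comm]; rfl
    _ = ∑ i with b i = c, (b i : ℝ) * M i i :=
        (Finset.sum_subtype {i | b i = c} (fun _ => by simp) fun i => (b i : ℝ) * M i i).symm

theorem apply_eq_zero_of_commute_diagonal {R : Type*} [CommRing R] [NoZeroDivisors R]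
    {X : Matrix ι ι R} {d : ι → R} (h : Commute X (diagonal d)) {i j : ι} (hij : d i ≠ d j) :
    X i j = 0 := by
  have hij' := congr_fun (congr_fun h.eq i) j
  rw [mul_diagonal, diagonal_mul] at hij'
  have : (d j - d i) * X i j = 0 := by linear_combination hij'
  exact (mul_eq_zero.mp this).resolve_left (sub_ne_zero.mpr hij.symm)

section Lie

attribute [local instance] LieRing.ofAssociativeRing

variable {R : Type*} [CommRing R]

theorem trace_lie_mul (X Y A : Matrix ι ι R) : (⁅X, Y⁆ * A).trace = (X * ⁅Y, A⁆).trace := by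
  simp only [Ring.lie_def, sub_mul, mul_sub, trace_sub, mul_assoc]
  rw [trace_mul_comm Y (X * A), mul_assoc]

def centralizerTraceMulZero (A : Matrix ι ι R) : LieSubalgebra R (Matrix ι ι R) where
  carrier := {X | Commute X A ∧ (X * A).trace = 0}
  add_mem' {X Y} hX hY :=
    ⟨hX.1.add_left hY.1, by rw [add_mul, trace_add, hX.2, hY.2, add_zero]⟩
  zero_mem' := ⟨Commute.zero_left A, by rw [zero_mul, trace_zero]⟩
  smul_mem' c X hX := ⟨hX.1.smul_left c, by rw [smul_mul_assoc, trace_smul, hX.2, smul_zero]⟩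
  lie_mem' {X Y} hX hY :=
    ⟨by rw [Ring.lie_def]; exact (hX.1.mul_left hY.1).sub_left (hY.1.mul_left hX.1),
      by rw [trace_lie_mul, commute_iff_lie_eq.mp hY.1, mul_zero, trace_zero]⟩

end Lie

end Matrix

attribute [local instance 100] LieRing.ofAssociativeRing

open NormedSpace in
theorem centralizer_trace_zero_is_lie_algebra_of_group_general (n : ℕ) (q : ℤ) (hq : q ≠ 0)
    (e : Fin n → ℤ) (α : Matrix (Fin n) (Fin n) ℝ)
    (hα : α = Matrix.diagonal fun i => (e i : ℝ) / (q : ℝ)) :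
    (∃ Lalg : LieSubalgebra ℝ (Matrix (Fin n) (Fin n) ℝ),
        (Lalg : Set (Matrix (Fin n) (Fin n) ℝ))
          = {X | X * α = α * X ∧ (X * α).trace = 0}) ∧
    ∀ X : Matrix (Fin n) (Fin n) ℝ,
      (X * α = α * X ∧ (X * α).trace = 0) ↔
        ∀ t : ℝ,
          exp (t • X) * α = α * exp (t • X) ∧
          ∏ c ∈ Finset.univ.image (fun i => e i),
            ((exp (t • X)).submatrix
              (fun j : {i : Fin n // e i = c} => (j : Fin n))
              (fun j : {i : Fin n // e i = c} => (j : Fin n))).det ^ c = 1 := by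
  have hq' : (q : ℝ) ≠ 0 := Int.cast_ne_zero.mpr hq
  have htrace (X : Matrix (Fin n) (Fin n) ℝ) : (X * α).trace = (∑ i, (e i : ℝ) * X i i) / q := by
    simp only [hα, Matrix.trace, Matrix.diag, Matrix.mul_diagonal, Finset.sum_div]
    exact Finset.sum_congr rfl fun i _ => by ring
  have htriangular (X : Matrix (Fin n) (Fin n) ℝ) (hX : Commute X α) : X.BlockTriangular e :=
    fun i j hji => Matrix.apply_eq_zero_of_commute_diagonal (hα ▸ hX)
      fun h => hji.ne' (Int.cast_injective ((div_left_inj' hq').mp h))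
  refine ⟨⟨Matrix.centralizerTraceMulZero α, rfl⟩, fun X => ⟨fun ⟨hX, htX⟩ t => ?_, fun h => ?_⟩⟩
  · replace hX : Commute X α := hX
    have hsum : ∑ i, (e i : ℝ) * X i i = 0 := by
      rw [htrace, div_eq_zero_iff] at htX
      exact htX.resolve_right hq'
    refine ⟨(hX.smul_left t).exp_left, ?_⟩
    change ∏ c ∈ Finset.univ.image e, ((exp (t • X)).toSquareBlock e c).det ^ c = 1
    rw [(htriangular _ (hX.smul_left t)).prod_det_toSquareBlock_exp_zpow]
    simp only [Matrix.smul_apply, smul_eq_mul, mul_left_comm _ t, ← Finset.mul_sum, hsum,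
      mul_zero, Real.exp_zero]
  · have hX : Commute X α := Matrix.commute_of_forall_commute_exp_smul fun t => (h t).1
    have hexp : ∏ c ∈ Finset.univ.image e, ((exp ((1 : ℝ) • X)).toSquareBlock e c).det ^ c = 1 :=
      (h 1).2
    rw [one_smul, (htriangular X hX).prod_det_toSquareBlock_exp_zpow, Real.exp_eq_one_iff] at hexp
    exact ⟨hX, by rw [htrace, hexp, zero_div]⟩

open NormedSpace in
/-- For a diagonal `α ∈ gl(n,ℝ)` with rational entries `e i / q` (weakly increasing),
the set `{X : [X,α]=0, tr(Xα)=0}` is a Lie subalgebra of `gl(n,ℝ)`, and it is the Lie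
algebra of the group `{g ∈ GL(n,ℝ) : gα=αg, ∏ det(g_i)^{q a_i} = 1}` (blocks `g_i`
given by the eigenspaces of `α`), in the sense that `X` lies in the set iff the whole
one-parameter group `exp(tX)` lies in that group. -/
theorem centralizer_trace_zero_is_lie_algebra_of_group (n : ℕ) (q : ℤ) (hq : q ≠ 0)
    (e : Fin n → ℤ) (α : Matrix (Fin n) (Fin n) ℝ)
    (hα : α = Matrix.diagonal fun i => (e i : ℝ) / (q : ℝ))
    (hmono : Monotone fun i => α i i) :
    (∃ Lalg : LieSubalgebra ℝ (Matrix (Fin n) (Fin n) ℝ),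
        (Lalg : Set (Matrix (Fin n) (Fin n) ℝ))
          = {X | X * α = α * X ∧ (X * α).trace = 0}) ∧
    ∀ X : Matrix (Fin n) (Fin n) ℝ,
      (X * α = α * X ∧ (X * α).trace = 0) ↔
        ∀ t : ℝ,
          exp (t • X) * α = α * exp (t • X) ∧
          ∏ c ∈ Finset.univ.image (fun i => e i),
            ((exp (t • X)).submatrix
              (fun j : {i : Fin n // e i = c} => (j : Fin n))
              (fun j : {i : Fin n // e i = c} => (j : Fin n))).det ^ c = 1 :=
  centralizer_trace_zero_is_lie_algebra_of_group_general n q hq e α hα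
end

section
/- Let m : V∖{0} → symm(n) be the moment map as above and F(v) = ‖m(v)‖². Then v ∈ V∖{0} is a critical point of F restricted to the sphere of radius ‖v‖ if and only if π(m(v))(v) = r v for some r ∈ ℝ; i.e., v is an eigenvector of the symmetric operator π(m(v)). -/
/-!
Near `v` the entries of `m` are the quotients `⟪π(Eᵢⱼ) u, u⟫ / ‖u‖²`, so `F` is a finite sum of
their squares. In a direction `w ⟂ v` the denominator has zero derivative, and the chain rule
gives `dF_v(w) = (2/‖v‖²) ∑ m(v)ᵢⱼ (⟪π(Eᵢⱼ) v, w⟫ + ⟪v, π(Eᵢⱼ) w⟫) = (4/‖v‖²) ⟪π(m(v)) v, w⟫`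
by linearity of `π` and symmetry of `π(m(v))`. So `v` is critical on its sphere iff
`π(m(v)) v ⟂ v^⟂`, i.e. `π(m(v)) v ∈ ℝ v`.
-/

open scoped RealInnerProductSpace Matrix
open Matrix

theorem Matrix.sum_sum_smul_map_single_one {m n R M : Type*} [Fintype m] [Fintype n]
    [DecidableEq m] [DecidableEq n] [Semiring R] [AddCommMonoid M] [Module R M]
    (L : Matrix m n R →ₗ[R] M) (A : Matrix m n R) :
    ∑ i, ∑ j, A i j • L (single i j 1) = L A := by
  conv_rhs => rw [matrix_eq_sum_single A]
  simp [map_sum, ← map_smul, smul_single]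

theorem Matrix.trace_mul_transpose_self {m n R : Type*} [Fintype m] [Fintype n] [Semiring R]
    (A : Matrix m n R) : (A * Aᵀ).trace = ∑ i, ∑ j, A i j ^ 2 := by
  simp [trace, mul_apply, sq]

section InnerProductSpace

variable {V : Type*} [NormedAddCommGroup V] [InnerProductSpace ℝ V]

theorem exists_eq_smul_iff_forall_inner_eq_zero_imp {v x : V} :
    (∃ r : ℝ, x = r • v) ↔ ∀ w : V, ⟪v, w⟫ = 0 → ⟪x, w⟫ = 0 := by
  constructor
  · rintro ⟨r, rfl⟩ w hw
    rw [real_inner_smul_left, hw, mul_zero]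
  · intro h
    have hx : x ∈ (ℝ ∙ v)ᗮᗮ := by
      rw [Submodule.mem_orthogonal']
      exact fun w hw => h w (Submodule.mem_orthogonal_singleton_iff_inner_right.mp hw)
    obtain ⟨r, hr⟩ := Submodule.mem_span_singleton.mp ((ℝ ∙ v).orthogonal_orthogonal ▸ hx)
    exact ⟨r, hr.symm⟩

theorem hasFDerivAt_inner_apply_self (T : V →L[ℝ] V) (v : V) :
    HasFDerivAt (fun u => ⟪T u, u⟫) (innerSL ℝ (T v) + (innerSL ℝ v).comp T) v :=
  ((T.hasFDerivAt (x := v)).inner ℝ (hasFDerivAt_id v)).congr_fderiv <| by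
    ext w
    simp [real_inner_comm (T w), add_comm]

theorem hasFDerivAt_inv_norm_sq {v : V} (hv : v ≠ 0) :
    HasFDerivAt (fun u : V => (‖u‖ ^ 2)⁻¹) (-((‖v‖ ^ 2) ^ 2)⁻¹ • 2 • innerSL ℝ v) v :=
  (hasDerivAt_inv (by positivity)).comp_hasFDerivAt v (hasStrictFDerivAt_norm_sq v).hasFDerivAt

theorem hasFDerivAt_inner_apply_self_div_norm_sq (T : V →L[ℝ] V) {v : V} (hv : v ≠ 0) :
    HasFDerivAt (fun u => ⟪T u, u⟫ / ‖u‖ ^ 2)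
      (⟪T v, v⟫ • (-((‖v‖ ^ 2) ^ 2)⁻¹ • 2 • innerSL ℝ v) +
        (‖v‖ ^ 2)⁻¹ • (innerSL ℝ (T v) + (innerSL ℝ v).comp T)) v := by
  simp only [div_eq_mul_inv]
  exact (hasFDerivAt_inner_apply_self T v).mul (hasFDerivAt_inv_norm_sq hv)

theorem differentiableAt_inner_apply_self_div_norm_sq (T : V →L[ℝ] V) {v : V} (hv : v ≠ 0) :
    DifferentiableAt ℝ (fun u => ⟪T u, u⟫ / ‖u‖ ^ 2) v :=
  (hasFDerivAt_inner_apply_self_div_norm_sq T hv).differentiableAt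

theorem fderiv_inner_apply_self_div_norm_sq_of_inner_eq_zero (T : V →L[ℝ] V) {v w : V}
    (hv : v ≠ 0) (hw : ⟪v, w⟫ = 0) :
    fderiv ℝ (fun u => ⟪T u, u⟫ / ‖u‖ ^ 2) v w = (⟪T v, w⟫ + ⟪v, T w⟫) / ‖v‖ ^ 2 := by
  rw [(hasFDerivAt_inner_apply_self_div_norm_sq T hv).fderiv]
  simp [hw, div_eq_inv_mul, mul_add]

end InnerProductSpace

section MomentMap

variable {n : ℕ} {V : Type*} [NormedAddCommGroup V] [InnerProductSpace ℝ V] [FiniteDimensional ℝ V]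
  {π : Matrix (Fin n) (Fin n) ℝ →ₗ[ℝ] V →ₗ[ℝ] V}

def IsMomentMap (π : Matrix (Fin n) (Fin n) ℝ →ₗ[ℝ] V →ₗ[ℝ] V) (m : V → Matrix (Fin n) (Fin n) ℝ) :
    Prop :=
  (∀ v, (m v)ᵀ = m v) ∧
    ∀ v : V, v ≠ 0 → ∀ α : Matrix (Fin n) (Fin n) ℝ, αᵀ = α →
      (m v * αᵀ).trace = ⟪π α v, v⟫ / ‖v‖ ^ 2

theorem inner_transpose_apply_self (hπadj : ∀ X, LinearMap.adjoint (π X) = π Xᵀ)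
    (α : Matrix (Fin n) (Fin n) ℝ) (u : V) : ⟪π αᵀ u, u⟫ = ⟪π α u, u⟫ := by
  rw [← hπadj, LinearMap.adjoint_inner_left, real_inner_comm]

variable {m : V → Matrix (Fin n) (Fin n) ℝ}

/-- Both sides are invariant under `α ↦ αᵀ`, so the identity for the symmetric matrix `α + αᵀ`
gives it for `α`. -/
theorem trace_moment_mul_transpose (hπadj : ∀ X, LinearMap.adjoint (π X) = π Xᵀ)
    (hm : IsMomentMap π m) {u : V} (hu : u ≠ 0) (α : Matrix (Fin n) (Fin n) ℝ) :
    (m u * αᵀ).trace = ⟪π α u, u⟫ / ‖u‖ ^ 2 := by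
  have hsymm := hm.2 u hu (α + αᵀ) (by rw [transpose_add, transpose_transpose, add_comm])
  have htrace : (m u * α).trace = (m u * αᵀ).trace := by
    rw [← trace_transpose, transpose_mul, hm.1, trace_mul_comm]
  rw [transpose_add, transpose_transpose, mul_add, trace_add, htrace, map_add,
    LinearMap.add_apply, inner_add_left, inner_transpose_apply_self hπadj, add_div] at hsymm
  linarith

theorem moment_apply (hπadj : ∀ X, LinearMap.adjoint (π X) = π Xᵀ)
    (hm : IsMomentMap π m) {u : V} (hu : u ≠ 0) (i j : Fin n) :
    m u i j = ⟪π (single i j 1) u, u⟫ / ‖u‖ ^ 2 := by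
  rw [← trace_moment_mul_transpose hπadj hm hu, transpose_single, trace_mul_single]
  simp

theorem fderiv_trace_moment_mul_transpose_of_inner_eq_zero
    (hπadj : ∀ X, LinearMap.adjoint (π X) = π Xᵀ)
    (hm : IsMomentMap π m) {v w : V} (hv : v ≠ 0) (hw : ⟪v, w⟫ = 0) :
    fderiv ℝ (fun u => (m u * (m u)ᵀ).trace) v w = 4 / ‖v‖ ^ 2 * ⟪π (m v) v, w⟫ := by
  set R : Fin n → Fin n → V → ℝ := fun i j u => ⟪π (single i j 1) u, u⟫ / ‖u‖ ^ 2
  have hF : (fun u => (m u * (m u)ᵀ).trace) =ᶠ[nhds v] fun u => ∑ i, ∑ j, R i j u ^ 2 := by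
    filter_upwards [compl_singleton_mem_nhds hv] with u hu
    simp only [trace_mul_transpose_self, moment_apply hπadj hm hu, R]
  have hRdiff : ∀ i j, DifferentiableAt ℝ (R i j) v := fun i j =>
    differentiableAt_inner_apply_self_div_norm_sq (π (single i j 1)).toContinuousLinearMap hv
  have hRderiv : ∀ i j, fderiv ℝ (R i j) v w =
      (⟪π (single i j 1) v, w⟫ + ⟪v, π (single i j 1) w⟫) / ‖v‖ ^ 2 := fun i j =>
    fderiv_inner_apply_self_div_norm_sq_of_inner_eq_zero (π (single i j 1)).toContinuousLinearMap
      hv hw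
  have hsymm_inner : ⟪π (m v) v, w⟫ + ⟪v, π (m v) w⟫ = 2 * ⟪π (m v) v, w⟫ := by
    rw [← LinearMap.adjoint_inner_left, hπadj, hm.1, real_inner_comm, two_mul]
  have hG : HasFDerivAt (fun u => ∑ i, ∑ j, R i j u ^ 2)
      (∑ i, ∑ j, (2 * R i j v) • fderiv ℝ (R i j) v) v :=
    HasFDerivAt.fun_sum fun i _ => HasFDerivAt.fun_sum fun j _ =>
      (HasFDerivAt.pow (hRdiff i j).hasFDerivAt 2).congr_fderiv (by simp)
  have hRv : ∀ i j, R i j v = m v i j := fun i j => (moment_apply hπadj hm hv i j).symm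
  have hexpand : ⟪π (m v) v, w⟫ + ⟪v, π (m v) w⟫ =
      ∑ i, ∑ j, m v i j * (⟪π (single i j 1) v, w⟫ + ⟪v, π (single i j 1) w⟫) := by
    rw [← Matrix.sum_sum_smul_map_single_one π (m v)]
    simp [sum_inner, inner_sum, inner_smul_left, inner_smul_right, mul_add, Finset.sum_add_distrib]
  rw [hF.fderiv_eq, hG.fderiv]
  calc (∑ i, ∑ j, (2 * R i j v) • fderiv ℝ (R i j) v) w
      = 2 / ‖v‖ ^ 2 * (⟪π (m v) v, w⟫ + ⟪v, π (m v) w⟫) := by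
        simp only [hexpand, Finset.mul_sum, hRv, _root_.sum_apply, _root_.smul_apply, hRderiv,
          smul_eq_mul]
        exact Finset.sum_congr rfl fun i _ => Finset.sum_congr rfl fun j _ => by ring
    _ = 4 / ‖v‖ ^ 2 * ⟪π (m v) v, w⟫ := by rw [hsymm_inner]; ring

end MomentMap

/-- For the moment map `m` and `F(v) = ‖m(v)‖²`, a nonzero `v` is a critical point of
`F` restricted to the sphere of radius `‖v‖` if and only if `v` is an eigenvector of
the symmetric operator `π(m(v))`, i.e. `π(m(v))v = r v` for some `r ∈ ℝ`. -/
theorem critical_point_iff_eigenvector (n : ℕ)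
    {V : Type*} [NormedAddCommGroup V] [InnerProductSpace ℝ V] [FiniteDimensional ℝ V]
    (π : Matrix (Fin n) (Fin n) ℝ →ₗ[ℝ] V →ₗ[ℝ] V)
    (hπadj : ∀ X : Matrix (Fin n) (Fin n) ℝ, LinearMap.adjoint (π X) = π Xᵀ)
    (m : V → Matrix (Fin n) (Fin n) ℝ)
    (hmsym : ∀ v, (m v)ᵀ = m v)
    (hm : ∀ v : V, v ≠ 0 → ∀ α : Matrix (Fin n) (Fin n) ℝ, αᵀ = α →
      (m v * αᵀ).trace = ⟪π α v, v⟫ / ‖v‖ ^ 2)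
    (v : V) (hv : v ≠ 0) :
    (∀ w : V, ⟪v, w⟫ = 0 →
        fderiv ℝ (fun u : V => ((m u) * (m u)ᵀ).trace) v w = 0) ↔
      ∃ r : ℝ, (π (m v)) v = r • v := by
  have hc : 4 / ‖v‖ ^ 2 ≠ 0 := by positivity
  rw [exists_eq_smul_iff_forall_inner_eq_zero_imp]
  refine forall₂_congr fun w hw => ?_
  rw [fderiv_trace_moment_mul_transpose_of_inner_eq_zero hπadj ⟨hmsym, hm⟩ hv hw, mul_eq_zero,
    or_iff_right hc]
end
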